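/- For every integer n ≥ 4 and every real p > 1, λ_{1,p}(P_{n+1}) > λ_{1,p}(T_{n,3}), where P_{n+1} denotes the path graph on n+1 vertices. -/

import Mathlib

attribute [local instance] Classical.propDecidable

open Finset

/-- The degree of a vertex `x` in a finite simple graph `G`. -/
noncomputable def deg {V : Type*} [Fintype V] (G : SimpleGraph V) (x : V) : ℕ :=
  (Finset.univ.filter (fun y => G.Adj x y)).card

/-- The `p`-energy `‖df‖_{p,G}^p = Σ_{{x,y} ∈ E(G)} |f x - f y|^p`
(each unordered edge counted once, i.e. half the double sum). -/
noncomputable def energy {V : Type*} [Fintype V] (G : SimpleGraph V) (p : ℝ) (f : V → ℝ) : ℝ :=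
  (∑ x : V, ∑ y : V, if G.Adj x y then |f x - f y| ^ p else 0) / 2

/-- The weighted `p`-norm `‖f‖_{p,G}^p = Σ_x |f x|^p · deg x`. -/
noncomputable def pnorm {V : Type*} [Fintype V] (G : SimpleGraph V) (p : ℝ) (f : V → ℝ) : ℝ :=
  ∑ x : V, |f x| ^ p * (deg G x : ℝ)

/-- The `p`-Rayleigh quotient `R_{p,G}[f]`. -/
noncomputable def rayleigh {V : Type*} [Fintype V] (G : SimpleGraph V) (p : ℝ) (f : V → ℝ) : ℝ :=
  energy G p f / pnorm G p f

/-- The first `p`-Dirichlet eigenvalue `λ_{1,p}(G)`: the infimum of Rayleigh quotients of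
nonzero functions vanishing on the boundary `B(G)` (the set of pendant vertices). -/
noncomputable def lambda1 {V : Type*} [Fintype V] (G : SimpleGraph V) (p : ℝ) : ℝ :=
  sInf { r : ℝ | ∃ f : V → ℝ, (∀ x : V, deg G x = 1 → f x = 0) ∧ f ≠ 0 ∧ r = rayleigh G p f }

/-- The number of edges with exactly one endpoint in `U`. -/
noncomputable def cutCard {V : Type*} [Fintype V] (G : SimpleGraph V) (U : Finset V) : ℕ :=
  ∑ x ∈ U, (Finset.univ.filter (fun y => G.Adj x y ∧ y ∉ U)).card

/-- The Dirichlet Cheeger constant `h_D(G)`. -/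
noncomputable def cheeger {V : Type*} [Fintype V] (G : SimpleGraph V) : ℝ :=
  sInf { r : ℝ | ∃ U : Finset V, U.Nonempty ∧ (∀ x ∈ U, deg G x ≠ 1) ∧
    r = (cutCard G U : ℝ) / ∑ x ∈ U, (deg G x : ℝ) }

/-- The tadpole graph `T_{n,i}` on vertices `0, …, n-1` (vertex `k-1` representing `t_k`):
edges between consecutive vertices together with the edge `t_1 ∼ t_i`. -/
def tadpole (n i : ℕ) : SimpleGraph (Fin n) :=
  SimpleGraph.fromRel (fun a b => b.val = a.val + 1 ∨ (a.val = 0 ∧ b.val = i - 1))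

/-- The path graph on `n` vertices. -/
def pathG (n : ℕ) : SimpleGraph (Fin n) :=
  SimpleGraph.fromRel (fun a b => b.val = a.val + 1)

/-!
Let `f` be a Dirichlet test function on the path `0, …, n` and `g = |f|`, maximal at an
interior vertex `m`. After possibly reflecting the path, either `m ≥ 3`, or `n = 4`, `m = 2` and
`g 1 ≤ g 3`. Transplant `g` to the tadpole by `t_{k+1} ↦ g (max (k + 1) m)`: everything below `m`
is flattened to the value `g m`, so the energy does not increase, while the weighted norm gains
at least `g m ^ p ≥ ‖f‖^p / (2n)`.
Hence `λ(T_{n,3}) ≤ 2n/(2n+1) · λ(P_{n+1})`, and `λ(P_{n+1}) > 0` because along the path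
`|f| ≤ n · max |df|`.
-/

lemma Fin.val_three_of_two_le {N : ℕ} (hN : 2 ≤ N) : ((3 : Fin (N + 2)) : ℕ) = 3 := by
  simp [Nat.mod_eq_of_lt (show 3 < N + 2 by omega)]

lemma Fin.val_two_of_one_le {N : ℕ} (hN : 1 ≤ N) : ((2 : Fin (N + 2)) : ℕ) = 2 := by
  simp [Nat.mod_eq_of_lt (show 2 < N + 2 by omega)]

def VanishesOnBoundary {V : Type*} [Fintype V] (G : SimpleGraph V) (f : V → ℝ) : Prop :=
  ∀ x, deg G x = 1 → f x = 0

section General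

variable {V : Type*} [Fintype V] {G : SimpleGraph V} {p : ℝ} {f : V → ℝ}

lemma energy_nonneg : 0 ≤ energy G p f := by
  refine div_nonneg ?_ zero_le_two
  refine Finset.sum_nonneg fun x _ => Finset.sum_nonneg fun y _ => ?_
  split_ifs <;> positivity

lemma pnorm_nonneg : 0 ≤ pnorm G p f :=
  Finset.sum_nonneg fun _ _ => by positivity

lemma rayleigh_nonneg : 0 ≤ rayleigh G p f :=
  div_nonneg energy_nonneg pnorm_nonneg

lemma lambda1_le_rayleigh (hf : VanishesOnBoundary G f) (hf0 : f ≠ 0) :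
    lambda1 G p ≤ rayleigh G p f :=
  csInf_le ⟨0, by rintro r ⟨g, -, -, rfl⟩; exact rayleigh_nonneg⟩ ⟨f, hf, hf0, rfl⟩

lemma le_lambda1 {c : ℝ} (hne : ∃ f, VanishesOnBoundary G f ∧ f ≠ 0)
    (h : ∀ f, VanishesOnBoundary G f → f ≠ 0 → c ≤ rayleigh G p f) : c ≤ lambda1 G p := by
  obtain ⟨f, hf, hf0⟩ := hne
  refine le_csInf ⟨_, f, hf, hf0, rfl⟩ ?_
  rintro r ⟨g, hg, hg0, rfl⟩
  exact h g hg hg0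

lemma energy_abs_le (hp : 0 ≤ p) : energy G p (fun x => |f x|) ≤ energy G p f := by
  unfold energy
  gcongr with x _ y _
  split_ifs
  · exact Real.rpow_le_rpow (abs_nonneg _) (abs_abs_sub_abs_le_abs_sub _ _) hp
  · exact le_rfl

lemma pnorm_abs : pnorm G p (fun x => |f x|) = pnorm G p f := by
  simp only [pnorm, abs_abs]

lemma cast_deg_eq_sum (x : V) : (deg G x : ℝ) = ∑ y, if G.Adj x y then 1 else 0 := by
  rw [deg, Finset.card_filter, Nat.cast_sum]
  exact Finset.sum_congr rfl fun y _ => by split_ifs <;> simp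

lemma pnorm_eq_sum_sum_adj : pnorm G p f = ∑ x, ∑ y, if G.Adj x y then |f x| ^ p else 0 := by
  refine Finset.sum_congr rfl fun x _ => ?_
  rw [cast_deg_eq_sum, Finset.mul_sum]
  refine Finset.sum_congr rfl fun y _ => ?_
  split_ifs <;> simp

lemma pnorm_pos {x y : V} (hx : f x ≠ 0) (hxy : G.Adj x y) : 0 < pnorm G p f := by
  refine Finset.sum_pos' (fun _ _ => by positivity) ⟨x, Finset.mem_univ _, ?_⟩
  have hdeg : 0 < deg G x := Finset.card_pos.mpr ⟨y, by simpa using hxy⟩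
  have := Real.rpow_pos_of_pos (abs_pos.mpr hx) p
  positivity

lemma deg_ne_one_of_adj {x y z : V} (hy : G.Adj x y) (hz : G.Adj x z) (hyz : y ≠ z) :
    deg G x ≠ 1 := by
  refine (Finset.one_lt_card.mpr ⟨y, ?_, z, ?_, hyz⟩).ne' <;> simpa

lemma deg_eq_one_of_forall_adj_iff {x y : V} (h : ∀ z, G.Adj x z ↔ z = y) : deg G x = 1 :=
  Finset.card_eq_one.mpr ⟨y, by ext z; simp [h]⟩

lemma sum_sum_adj_comp_iso (φ : G ≃g G) (w : V → V → ℝ) :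
    ∑ x, ∑ y, (if G.Adj x y then w (φ x) (φ y) else 0) =
      ∑ x, ∑ y, if G.Adj x y then w x y else 0 := by
  calc ∑ x, ∑ y, (if G.Adj x y then w (φ x) (φ y) else 0)
      = ∑ x, ∑ y, (if G.Adj (φ x) (φ y) then w (φ x) (φ y) else 0) := by
        simp only [φ.map_adj_iff]
    _ = ∑ x, ∑ y, if G.Adj x y then w x y else 0 := by
        rw [← Equiv.sum_comp φ.toEquiv (fun x => ∑ y, if G.Adj x y then w x y else 0)]
        exact Finset.sum_congr rfl fun x _ =>
          Equiv.sum_comp φ.toEquiv (fun y => if G.Adj (φ x) y then w (φ x) y else 0)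

lemma energy_comp_iso (φ : G ≃g G) : energy G p (f ∘ φ) = energy G p f := by
  unfold energy
  exact congrArg (· / 2) (sum_sum_adj_comp_iso φ (fun x y => |f x - f y| ^ p))

lemma pnorm_comp_iso (φ : G ≃g G) : pnorm G p (f ∘ φ) = pnorm G p f := by
  simp only [pnorm_eq_sum_sum_adj]
  exact sum_sum_adj_comp_iso φ (fun x _ => |f x| ^ p)

lemma sum_sum_adj_eq {r : V → V → Prop} [DecidableRel r] (hr : ∀ x y, r x y → ¬ r y x)
    (hG : ∀ x y, G.Adj x y ↔ r x y ∨ r y x) (w : V → V → ℝ) :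
    ∑ x, ∑ y, (if G.Adj x y then w x y else 0) =
      ∑ x, ∑ y, if r x y then w x y + w y x else 0 := by
  have hsplit : ∀ x y, (if G.Adj x y then w x y else 0) =
      (if r x y then w x y else 0) + (if r y x then w x y else 0) := by
    intro x y
    by_cases hxy : r x y
    · simp [hG, hxy, hr x y hxy]
    · by_cases hyx : r y x <;> simp [hG, hxy, hyx]
  simp only [hsplit, Finset.sum_add_distrib]
  rw [Finset.sum_comm (f := fun x y => if r y x then w x y else 0), ← Finset.sum_add_distrib]
  refine Finset.sum_congr rfl fun x _ => ?_
  rw [← Finset.sum_add_distrib]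
  refine Finset.sum_congr rfl fun y _ => ?_
  split_ifs <;> simp

lemma energy_eq_sum_sum {r : V → V → Prop} [DecidableRel r] (hr : ∀ x y, r x y → ¬ r y x)
    (hG : ∀ x y, G.Adj x y ↔ r x y ∨ r y x) :
    energy G p f = ∑ x, ∑ y, if r x y then |f x - f y| ^ p else 0 := by
  rw [energy, sum_sum_adj_eq hr hG, Finset.sum_div]
  refine Finset.sum_congr rfl fun x _ => ?_
  rw [Finset.sum_div]
  refine Finset.sum_congr rfl fun y _ => ?_
  split_ifs
  · rw [abs_sub_comm (f y)]; ring
  · simp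

lemma pnorm_eq_sum_sum {r : V → V → Prop} [DecidableRel r] (hr : ∀ x y, r x y → ¬ r y x)
    (hG : ∀ x y, G.Adj x y ↔ r x y ∨ r y x) :
    pnorm G p f = ∑ x, ∑ y, if r x y then |f x| ^ p + |f y| ^ p else 0 :=
  pnorm_eq_sum_sum_adj.trans (sum_sum_adj_eq hr hG fun x _ => |f x| ^ p)

end General

section PathAndTadpole

variable {N i : ℕ} {p : ℝ}

lemma pathG_adj {n : ℕ} {x y : Fin n} :
    (pathG n).Adj x y ↔ y.val = x.val + 1 ∨ x.val = y.val + 1 := by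
  rw [pathG, SimpleGraph.fromRel_adj]
  exact and_iff_right_of_imp fun h heq => by subst heq; omega

lemma tadpole_adj {n : ℕ} (hi : 3 ≤ i) {x y : Fin n} :
    (tadpole n i).Adj x y ↔ (y.val = x.val + 1 ∨ x.val = 0 ∧ y.val = i - 1) ∨
      (x.val = y.val + 1 ∨ y.val = 0 ∧ x.val = i - 1) := by
  rw [tadpole, SimpleGraph.fromRel_adj]
  exact and_iff_right_of_imp fun h heq => by subst heq; omega

lemma sum_sum_succ_eq (F : Fin (N + 1) → Fin (N + 1) → ℝ) :
    ∑ x, ∑ y, (if y.val = x.val + 1 then F x y else 0) = ∑ k : Fin N, F k.castSucc k.succ := by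
  rw [Fin.sum_univ_castSucc, Finset.sum_eq_zero (s := Finset.univ) fun y _ => if_neg (by
    simp only [Fin.val_last]; omega), add_zero]
  refine Finset.sum_congr rfl fun k _ => ?_
  have hsucc : ∀ y : Fin (N + 1), y.val = k.castSucc.val + 1 ↔ y = k.succ := by
    simp [Fin.ext_iff]
  simp only [hsucc, Finset.sum_ite_eq', Finset.mem_univ, if_true]

lemma sum_sum_tadpole_eq (hi : 3 ≤ i) (hiN : i ≤ N + 1) (F : Fin (N + 1) → Fin (N + 1) → ℝ) :
    ∑ x, ∑ y, (if y.val = x.val + 1 ∨ x.val = 0 ∧ y.val = i - 1 then F x y else 0) =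
      ∑ k : Fin N, F k.castSucc k.succ + F 0 ⟨i - 1, by omega⟩ := by
  have hsplit : ∀ x y : Fin (N + 1),
      (if y.val = x.val + 1 ∨ x.val = 0 ∧ y.val = i - 1 then F x y else 0) =
        (if y.val = x.val + 1 then F x y else 0) +
          (if x = 0 ∧ y = ⟨i - 1, by omega⟩ then F x y else 0) := by
    intro x y
    by_cases hA : y.val = x.val + 1
    · have hB : ¬(x = 0 ∧ y = ⟨i - 1, by omega⟩) := by
        rintro ⟨rfl, h2⟩
        rw [h2] at hA
        simp only [Fin.val_zero] at hA
        omega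
      rw [if_pos (Or.inl hA), if_pos hA, if_neg hB, add_zero]
    · by_cases hB : x = 0 ∧ y = ⟨i - 1, by omega⟩
      · obtain ⟨rfl, rfl⟩ := hB
        rw [if_pos (Or.inr ⟨rfl, rfl⟩), if_neg hA, if_pos ⟨rfl, rfl⟩, zero_add]
      · have hB' : ¬(x.val = 0 ∧ y.val = i - 1) := fun h => hB ⟨Fin.ext h.1, Fin.ext h.2⟩
        rw [if_neg (not_or.mpr ⟨hA, hB'⟩), if_neg hA, if_neg hB, add_zero]
  simp only [hsplit, Finset.sum_add_distrib, sum_sum_succ_eq, ite_and]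
  simp

lemma energy_pathG (f : Fin (N + 1) → ℝ) :
    energy (pathG (N + 1)) p f = ∑ k : Fin N, |f k.castSucc - f k.succ| ^ p := by
  rw [energy_eq_sum_sum (r := fun x y : Fin (N + 1) => y.val = x.val + 1)
    (fun _ _ h h' => by omega) fun _ _ => pathG_adj, sum_sum_succ_eq]

lemma pnorm_pathG (f : Fin (N + 1) → ℝ) :
    pnorm (pathG (N + 1)) p f = ∑ k : Fin N, (|f k.castSucc| ^ p + |f k.succ| ^ p) := by
  rw [pnorm_eq_sum_sum (r := fun x y : Fin (N + 1) => y.val = x.val + 1)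
    (fun _ _ h h' => by omega) fun _ _ => pathG_adj, sum_sum_succ_eq]

lemma energy_tadpole (hi : 3 ≤ i) (hiN : i ≤ N + 1) (f : Fin (N + 1) → ℝ) :
    energy (tadpole (N + 1) i) p f =
      ∑ k : Fin N, |f k.castSucc - f k.succ| ^ p + |f 0 - f ⟨i - 1, by omega⟩| ^ p := by
  rw [energy_eq_sum_sum
    (r := fun x y : Fin (N + 1) => y.val = x.val + 1 ∨ x.val = 0 ∧ y.val = i - 1)
    (fun _ _ h h' => by omega) fun _ _ => tadpole_adj hi, sum_sum_tadpole_eq hi hiN]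

lemma pnorm_tadpole (hi : 3 ≤ i) (hiN : i ≤ N + 1) (f : Fin (N + 1) → ℝ) :
    pnorm (tadpole (N + 1) i) p f =
      ∑ k : Fin N, (|f k.castSucc| ^ p + |f k.succ| ^ p) +
        (|f 0| ^ p + |f ⟨i - 1, by omega⟩| ^ p) := by
  rw [pnorm_eq_sum_sum
    (r := fun x y : Fin (N + 1) => y.val = x.val + 1 ∨ x.val = 0 ∧ y.val = i - 1)
    (fun _ _ h h' => by omega) fun _ _ => tadpole_adj hi, sum_sum_tadpole_eq hi hiN]

end PathAndTadpole

section Boundary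

variable {N i : ℕ}

lemma vanishesOnBoundary_pathG_iff {f : Fin (N + 2) → ℝ} :
    VanishesOnBoundary (pathG (N + 2)) f ↔ f 0 = 0 ∧ f (Fin.last (N + 1)) = 0 := by
  constructor
  · intro hf
    refine ⟨hf 0 (deg_eq_one_of_forall_adj_iff (y := 1) fun z => ?_),
      hf _ (deg_eq_one_of_forall_adj_iff (y := (Fin.last N).castSucc) fun z => ?_)⟩
    all_goals
      rw [pathG_adj, Fin.ext_iff]
      simp only [Fin.val_zero, Fin.val_one, Fin.val_last, Fin.val_castSucc]
      omega
  · rintro ⟨h0, hlast⟩ x hx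
    by_cases hx0 : x = 0
    · rwa [hx0]
    by_cases hxl : x = Fin.last (N + 1)
    · rwa [hxl]
    have hx0' : x.val ≠ 0 := fun h => hx0 (Fin.ext h)
    have hxl' : x.val ≠ N + 1 := fun h => hxl (Fin.ext h)
    refine absurd hx (deg_ne_one_of_adj (y := (⟨x.val - 1, by omega⟩ : Fin (N + 2)))
      (z := (⟨x.val + 1, by omega⟩ : Fin (N + 2))) ?_ ?_ ?_)
    all_goals simp only [pathG_adj, ne_eq, Fin.mk.injEq, true_or]
    all_goals omega

lemma vanishesOnBoundary_tadpole (hi : 3 ≤ i) (hiN : i ≤ N + 1) {f : Fin (N + 1) → ℝ}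
    (hf : f (Fin.last N) = 0) : VanishesOnBoundary (tadpole (N + 1) i) f := by
  intro x hx
  by_cases hxl : x = Fin.last N
  · rwa [hxl]
  have hxl' : x.val ≠ N := fun h => hxl (Fin.ext h)
  by_cases hx0 : x.val = 0
  · refine absurd hx (deg_ne_one_of_adj (y := (⟨1, by omega⟩ : Fin (N + 1)))
      (z := (⟨i - 1, by omega⟩ : Fin (N + 1))) ?_ ?_ ?_)
    all_goals simp only [tadpole_adj hi, ne_eq, Fin.mk.injEq, and_true]
    all_goals omega
  · refine absurd hx (deg_ne_one_of_adj (y := (⟨x.val - 1, by omega⟩ : Fin (N + 1)))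
      (z := (⟨x.val + 1, by omega⟩ : Fin (N + 1))) ?_ ?_ ?_)
    all_goals simp only [tadpole_adj hi, ne_eq, Fin.mk.injEq, true_or]
    all_goals omega

lemma exists_vanishesOnBoundary_pathG (hN : 1 ≤ N) :
    ∃ f, VanishesOnBoundary (pathG (N + 2)) f ∧ f ≠ 0 := by
  refine ⟨Pi.single ⟨1, by omega⟩ 1, vanishesOnBoundary_pathG_iff.mpr ⟨?_, ?_⟩, ?_⟩
  · exact Pi.single_eq_of_ne (by simp) _
  · exact Pi.single_eq_of_ne (by simp [Fin.ext_iff]; omega) _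
  · simp

def pathGRev (n : ℕ) : pathG n ≃g pathG n :=
  { Fin.revPerm with
    map_rel_iff' := by
      intro x y
      simp only [Fin.revPerm_apply, pathG_adj, Fin.val_rev]
      omega }

@[simp]
lemma pathGRev_apply {n : ℕ} (x : Fin n) : pathGRev n x = x.rev := rfl

end Boundary

section Transplant

variable {N : ℕ} {p : ℝ} {g : Fin (N + 2) → ℝ} {m : Fin (N + 2)}

-- Shifts `g` by one vertex and raises it to `g m` below `m`; for `m ≥ 3` this makes the triangle
-- `t_1 t_2 t_3` constant.
def transplant (g : Fin (N + 2) → ℝ) (m : Fin (N + 2)) (v : Fin (N + 1)) : ℝ :=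
  g (max v.succ m)

lemma abs_comp_max_sub_comp_max_le {α : Type*} [LinearOrder α] (g : α → ℝ) {a b m : α}
    (hab : a ≤ b) (hm : m ≤ a ∨ b ≤ m) : |g (max a m) - g (max b m)| ≤ |g a - g b| := by
  rcases hm with hm | hm
  · rw [max_eq_left hm, max_eq_left (hm.trans hab)]
  · rw [max_eq_right (hab.trans hm), max_eq_right hm, sub_self, abs_zero]
    exact abs_nonneg _

lemma transplant_of_succ_le {v : Fin (N + 1)} (hv : v.val + 1 ≤ m.val) :
    transplant g m v = g m :=
  congrArg g (max_eq_right (Fin.le_iff_val_le_val.mpr hv))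

lemma transplant_last : transplant g m (Fin.last N) = g (Fin.last (N + 1)) :=
  congrArg g (max_eq_left (Fin.le_last m))

lemma abs_transplant_sub_le (k : Fin N) :
    |transplant g m k.castSucc - transplant g m k.succ| ≤ |g k.succ.castSucc - g k.succ.succ| := by
  rw [transplant, transplant, Fin.succ_castSucc]
  refine abs_comp_max_sub_comp_max_le g (Fin.castSucc_le_succ _) ?_
  simp only [Fin.le_iff_val_le_val, Fin.val_castSucc, Fin.val_succ]
  omega

lemma abs_le_abs_transplant (hmax : ∀ x, |g x| ≤ |g m|) (v : Fin (N + 1)) :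
    |g v.succ| ≤ |transplant g m v| := by
  rcases le_total m v.succ with h | h
  · rw [transplant, max_eq_left h]
  · rw [transplant, max_eq_right h]
    exact hmax _

-- The triangle edge `t_1 t_3` costs `|g m - g (max 3 m)| ^ p`; it is paid for by the path edge
-- `1 2`, which the flattened transplant does not use.
lemma energy_tadpole_transplant_le (hN : 2 ≤ N) (hp : 0 < p) (hm : 2 ≤ m.val)
    (htri : |g m - g (max 3 m)| ≤ |g 1 - g 2|) :
    energy (tadpole (N + 1) 3) p (transplant g m) ≤ energy (pathG (N + 2)) p g := by
  obtain ⟨K, rfl⟩ : ∃ K, N = K + 2 := ⟨N - 2, by omega⟩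
  have hedge (k : Fin (K + 2)) : |transplant g m k.castSucc - transplant g m k.succ| ^ p ≤
      |g k.succ.castSucc - g k.succ.succ| ^ p :=
    Real.rpow_le_rpow (abs_nonneg _) (abs_transplant_sub_le k) hp.le
  have h0 : transplant g m 0 = g m := transplant_of_succ_le (by simp; omega)
  have h1 : transplant g m 1 = g m := transplant_of_succ_le (by simp; omega)
  have h2 : transplant g m ⟨3 - 1, by omega⟩ = g (max 3 m) := by
    rw [transplant]
    congr 2
  rw [energy_tadpole le_rfl (by omega), energy_pathG, Fin.sum_univ_succ,
    Fin.sum_univ_succ (n := K + 2), Fin.sum_univ_succ (n := K + 1)]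
  simp only [Fin.castSucc_zero, Fin.succ_zero_eq_one, Fin.castSucc_one, Fin.succ_one_eq_two,
    h0, h1, h2, sub_self, abs_zero, Real.zero_rpow hp.ne', zero_add]
  have htail := Finset.sum_le_sum (s := Finset.univ) fun (k : Fin (K + 1)) _ => hedge k.succ
  have htri' := Real.rpow_le_rpow (abs_nonneg _) htri hp.le
  have h01 : 0 ≤ |g 0 - g 1| ^ p := by positivity
  linarith

lemma pnorm_pathG_add_le_pnorm_tadpole_transplant (hN : 2 ≤ N) (hp : 0 < p) (hm : 1 ≤ m.val)
    (hmax : ∀ x, |g x| ≤ |g m|) (hg0 : g 0 = 0) (hside : |g 1| ≤ |g (max 3 m)|) :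
    pnorm (pathG (N + 2)) p g + |g m| ^ p ≤ pnorm (tadpole (N + 1) 3) p (transplant g m) := by
  obtain ⟨K, rfl⟩ : ∃ K, N = K + 2 := ⟨N - 2, by omega⟩
  have hvertex (v : Fin (K + 3)) : |g v.succ| ^ p ≤ |transplant g m v| ^ p :=
    Real.rpow_le_rpow (abs_nonneg _) (abs_le_abs_transplant hmax v) hp.le
  have h0 : transplant g m 0 = g m := transplant_of_succ_le (by simp; omega)
  have h2 : transplant g m ⟨3 - 1, by omega⟩ = g (max 3 m) := by
    rw [transplant]
    congr 2
  rw [pnorm_tadpole le_rfl (by omega), pnorm_pathG, Fin.sum_univ_succ]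
  simp only [Fin.castSucc_zero, Fin.succ_zero_eq_one, h0, h2, hg0, abs_zero,
    Real.zero_rpow hp.ne', zero_add, ← Fin.succ_castSucc]
  have htail := Finset.sum_le_sum (s := Finset.univ) fun (k : Fin (K + 2)) _ =>
    add_le_add (hvertex k.castSucc) (hvertex k.succ)
  have hside' := Real.rpow_le_rpow (abs_nonneg _) hside hp.le
  linarith

lemma exists_tadpole_test_of_three_le_or_eq_two (hN : 2 ≤ N) (hp : 0 < p) (hg : ∀ x, 0 ≤ g x)
    (hg0 : g 0 = 0) (hglast : g (Fin.last (N + 1)) = 0) (hmax : ∀ x, g x ≤ g m) (hpos : 0 < g m)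
    (hm : 3 ≤ m ∨ m = 2 ∧ g 1 ≤ g 3) :
    ∃ h : Fin (N + 1) → ℝ, VanishesOnBoundary (tadpole (N + 1) 3) h ∧ h ≠ 0 ∧
      energy (tadpole (N + 1) 3) p h ≤ energy (pathG (N + 2)) p g ∧
      pnorm (pathG (N + 2)) p g + g m ^ p ≤ pnorm (tadpole (N + 1) 3) p h := by
  have habs : ∀ x, |g x| = g x := fun x => abs_of_nonneg (hg x)
  have hm2 : 2 ≤ m.val := by
    rcases hm with h3 | ⟨rfl, -⟩
    · have := Fin.le_iff_val_le_val.mp h3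
      rw [Fin.val_three_of_two_le hN] at this
      omega
    · rw [Fin.val_two_of_one_le (by omega)]
  have h0 : transplant g m 0 = g m := transplant_of_succ_le (by simp; omega)
  have ⟨htri, hside⟩ : |g m - g (max 3 m)| ≤ |g 1 - g 2| ∧ |g 1| ≤ |g (max 3 m)| := by
    rcases hm with h3 | ⟨rfl, h13⟩
    · rw [max_eq_right h3, sub_self, abs_zero, habs, habs]
      exact ⟨abs_nonneg _, hmax 1⟩
    · have h32 : (2 : Fin (N + 2)) ≤ 3 := by
        rw [Fin.le_iff_val_le_val, Fin.val_two_of_one_le (by omega), Fin.val_three_of_two_le hN]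
        omega
      rw [max_eq_left h32, habs, habs, abs_of_nonneg (sub_nonneg.mpr (hmax 3)),
        abs_of_nonpos (sub_nonpos.mpr (hmax 1))]
      exact ⟨by linarith, h13⟩
  refine ⟨transplant g m, vanishesOnBoundary_tadpole le_rfl (by omega)
    (by rw [transplant_last, hglast]), fun h => hpos.ne' ?_,
    energy_tadpole_transplant_le hN hp hm2 htri, ?_⟩
  · rw [← h0, h, Pi.zero_apply]
  · rw [← habs m]
    exact pnorm_pathG_add_le_pnorm_tadpole_transplant hN hp (by omega)
      (fun x => by rw [habs, habs]; exact hmax x) hg0 hside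

lemma exists_tadpole_test (hN : 3 ≤ N) (hp : 0 < p) (hg : ∀ x, 0 ≤ g x) (hg0 : g 0 = 0)
    (hglast : g (Fin.last (N + 1)) = 0) (hmax : ∀ x, g x ≤ g m) (hpos : 0 < g m) :
    ∃ h : Fin (N + 1) → ℝ, VanishesOnBoundary (tadpole (N + 1) 3) h ∧ h ≠ 0 ∧
      energy (tadpole (N + 1) 3) p h ≤ energy (pathG (N + 2)) p g ∧
      pnorm (pathG (N + 2)) p g + g m ^ p ≤ pnorm (tadpole (N + 1) 3) p h := by
  by_cases hm : 3 ≤ m ∨ m = 2 ∧ g 1 ≤ g 3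
  · exact exists_tadpole_test_of_three_le_or_eq_two (by omega) hp hg hg0 hglast hmax hpos hm
  have hm0 : m.val ≠ 0 := fun h => by rw [Fin.ext (b := 0) h, hg0] at hpos; exact hpos.false
  have hmlast : m.val ≠ N + 1 := fun h => by
    rw [Fin.ext (b := Fin.last (N + 1)) h, hglast] at hpos; exact hpos.false
  have hrev : 3 ≤ m.rev ∨ m.rev = 2 ∧ g (1 : Fin (N + 2)).rev ≤ g (3 : Fin (N + 2)).rev := by
    simp only [not_or, not_and, not_le, Fin.lt_def, Fin.val_three_of_two_le (by omega : 2 ≤ N)]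
      at hm
    by_cases hfar : m.val ≤ 1 ∨ 4 ≤ N
    · left
      rw [Fin.le_def, Fin.val_three_of_two_le (by omega), Fin.val_rev]
      omega
    · obtain rfl : N = 3 := by omega
      obtain rfl : m = 2 := Fin.ext (by simp only [Fin.isValue, Fin.val_two]; omega)
      exact Or.inr ⟨rfl, (hm.2 rfl).le⟩
  obtain ⟨h, hbd, hne, hE, hnorm⟩ := exists_tadpole_test_of_three_le_or_eq_two
    (g := g ∘ pathGRev (N + 2)) (m := m.rev) (by omega) hp (fun _ => hg _)
    (by simpa using hglast) (by simpa using hg0) (fun x => by simpa using hmax x.rev)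
    (by simpa using hpos) hrev
  rw [energy_comp_iso] at hE
  rw [pnorm_comp_iso] at hnorm
  exact ⟨h, hbd, hne, hE, by simpa using hnorm⟩

end Transplant

section Eigenvalue

variable {N : ℕ} {p : ℝ}

lemma abs_le_mul_of_abs_sub_le {f : Fin (N + 1) → ℝ} {D : ℝ} (hf0 : f 0 = 0)
    (hD : ∀ k : Fin N, |f k.castSucc - f k.succ| ≤ D) (x : Fin (N + 1)) : |f x| ≤ x.val * D := by
  induction x using Fin.induction with
  | zero => simp [hf0]
  | succ k ih =>
    have hstep := abs_sub_abs_le_abs_sub (f k.succ) (f k.castSucc)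
    rw [abs_sub_comm] at hstep
    rw [Fin.val_castSucc] at ih
    rw [Fin.val_succ]
    push_cast
    linarith [hD k]

lemma pnorm_pathG_le (hp : 0 ≤ p) {f : Fin (N + 1) → ℝ} {M : ℝ} (hM : ∀ x, |f x| ≤ M) :
    pnorm (pathG (N + 1)) p f ≤ 2 * N * M ^ p := by
  have hMp (x : Fin (N + 1)) : |f x| ^ p ≤ M ^ p :=
    Real.rpow_le_rpow (abs_nonneg _) (hM x) hp
  rw [pnorm_pathG]
  calc ∑ k : Fin N, (|f k.castSucc| ^ p + |f k.succ| ^ p)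
      ≤ ∑ _k : Fin N, 2 * M ^ p :=
        Finset.sum_le_sum fun k _ => by linarith [hMp k.castSucc, hMp k.succ]
    _ = 2 * N * M ^ p := by simp; ring

lemma pnorm_pathG_le_energy (hN : 0 < N) (hp : 0 ≤ p) {f : Fin (N + 1) → ℝ} (hf0 : f 0 = 0) :
    pnorm (pathG (N + 1)) p f ≤ 2 * N * N ^ p * energy (pathG (N + 1)) p f := by
  have : Nonempty (Fin N) := ⟨⟨0, hN⟩⟩
  obtain ⟨k₀, hk₀⟩ := Finite.exists_max fun k : Fin N => |f k.castSucc - f k.succ|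
  set D := |f k₀.castSucc - f k₀.succ|
  have hbound (x : Fin (N + 1)) : |f x| ≤ N * D :=
    (abs_le_mul_of_abs_sub_le hf0 hk₀ x).trans
      (mul_le_mul_of_nonneg_right (by exact_mod_cast x.is_le) (abs_nonneg _))
  have hD : D ^ p ≤ energy (pathG (N + 1)) p f := by
    rw [energy_pathG]
    exact Finset.single_le_sum (f := fun k : Fin N => |f k.castSucc - f k.succ| ^ p)
      (fun k _ => by positivity) (Finset.mem_univ k₀)
  calc pnorm (pathG (N + 1)) p f ≤ 2 * N * (N * D) ^ p := pnorm_pathG_le hp hbound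
    _ = 2 * N * N ^ p * D ^ p := by
      rw [Real.mul_rpow (Nat.cast_nonneg _) (abs_nonneg _)]; ring
    _ ≤ 2 * N * N ^ p * energy (pathG (N + 1)) p f := by gcongr

lemma pnorm_pathG_pos {f : Fin (N + 2) → ℝ} (hf : f ≠ 0) : 0 < pnorm (pathG (N + 2)) p f := by
  obtain ⟨x, hx⟩ := Function.ne_iff.mp hf
  by_cases hxl : x.val = N + 1
  · exact pnorm_pos (y := ⟨N, by omega⟩) hx (pathG_adj.mpr (Or.inr (by simp [hxl])))
  · exact pnorm_pos (y := ⟨x.val + 1, by omega⟩) hx (pathG_adj.mpr (Or.inl rfl))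

lemma lambda1_pathG_pos (hN : 1 ≤ N) (hp : 0 < p) : 0 < lambda1 (pathG (N + 2)) p := by
  have hC : (0 : ℝ) < 2 * (N + 1) * (N + 1) ^ p := by positivity
  refine (one_div_pos.mpr hC).trans_le
    (le_lambda1 (exists_vanishesOnBoundary_pathG hN) fun f hf hf0 => ?_)
  have hbound := pnorm_pathG_le_energy (N := N + 1) (by omega) hp.le
    (vanishesOnBoundary_pathG_iff.mp hf).1
  push_cast at hbound
  rw [rayleigh, div_le_div_iff₀ hC (pnorm_pathG_pos hf0)]
  linarith

lemma lambda1_tadpole_le_mul_rayleigh (hN : 3 ≤ N) (hp : 0 < p) {f : Fin (N + 2) → ℝ}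
    (hf : VanishesOnBoundary (pathG (N + 2)) f) (hf0 : f ≠ 0) :
    lambda1 (tadpole (N + 1) 3) p ≤
      2 * (N + 1) / (2 * (N + 1) + 1) * rayleigh (pathG (N + 2)) p f := by
  obtain ⟨hf0', hflast⟩ := vanishesOnBoundary_pathG_iff.mp hf
  obtain ⟨m, hm⟩ := Finite.exists_max fun x => |f x|
  obtain ⟨x, hx⟩ := Function.ne_iff.mp hf0
  have hpos : 0 < |f m| := (abs_pos.mpr hx).trans_le (hm x)
  obtain ⟨h, hbd, hne, hE, hnorm⟩ := exists_tadpole_test (g := fun x => |f x|) hN hp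
    (fun _ => abs_nonneg _) (by simp [hf0']) (by simp [hflast]) hm hpos
  rw [pnorm_abs] at hnorm
  have hE' := hE.trans (energy_abs_le hp.le)
  have hM : pnorm (pathG (N + 2)) p f ≤ 2 * (N + 1) * |f m| ^ p := by
    simpa using pnorm_pathG_le (N := N + 1) hp.le hm
  have hP := pnorm_pathG_pos (p := p) hf0
  set P := pnorm (pathG (N + 2)) p f
  set E := energy (pathG (N + 2)) p f
  calc lambda1 (tadpole (N + 1) 3) p ≤ rayleigh (tadpole (N + 1) 3) p h :=
        lambda1_le_rayleigh hbd hne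
    _ ≤ E / (P + |f m| ^ p) := div_le_div₀ energy_nonneg hE' (by positivity) hnorm
    _ ≤ E / (P + P / (2 * (N + 1))) := by
        refine div_le_div_of_nonneg_left energy_nonneg (by positivity) (add_le_add_right ?_ P)
        rw [div_le_iff₀ (by positivity)]
        linarith
    _ = 2 * (N + 1) / (2 * (N + 1) + 1) * rayleigh (pathG (N + 2)) p f := by
        change _ = _ * (E / P)
        field_simp

lemma lambda1_tadpole_le_mul_lambda1_pathG (hN : 3 ≤ N) (hp : 0 < p) :
    lambda1 (tadpole (N + 1) 3) p ≤
      2 * (N + 1) / (2 * (N + 1) + 1) * lambda1 (pathG (N + 2)) p := by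
  have hc : (0 : ℝ) < 2 * (N + 1) / (2 * (N + 1) + 1) := by positivity
  rw [← div_le_iff₀' hc]
  exact le_lambda1 (exists_vanishesOnBoundary_pathG (by omega)) fun f hf hf0 =>
    (div_le_iff₀' hc).mpr (lambda1_tadpole_le_mul_rayleigh hN hp hf hf0)

end Eigenvalue

/-- For `n ≥ 4` and `p > 1`, `λ_{1,p}(P_{n+1}) > λ_{1,p}(T_{n,3})`. -/
theorem path_tadpole_comparison (n : ℕ) (hn : 4 ≤ n) (p : ℝ) (hp : 1 < p) :
    lambda1 (tadpole n 3) p < lambda1 (pathG (n + 1)) p := by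
  obtain ⟨N, rfl⟩ : ∃ N, n = N + 1 := ⟨n - 1, by omega⟩
  have hp0 : 0 < p := by linarith
  have hc : 2 * ((N : ℝ) + 1) / (2 * (N + 1) + 1) < 1 := by
    rw [div_lt_one (by positivity)]
    linarith
  calc lambda1 (tadpole (N + 1) 3) p
      ≤ 2 * (N + 1) / (2 * (N + 1) + 1) * lambda1 (pathG (N + 2)) p :=
        lambda1_tadpole_le_mul_lambda1_pathG (by omega) hp0
    _ < lambda1 (pathG (N + 2)) p := mul_lt_of_lt_one_left (lambda1_pathG_pos (by omega) hp0) hc
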